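/- arXiv:1802.10555 — 4 statements merged into one kernel-verified Lean document; each statement's English description precedes it below -/
import Mathlib

section
/- The set of Reg-continuous functions over a one-letter alphabet is uncountable. Precisely, the set {f : {a}* → {a}* | for every regular language L ⊆ {a}*, the preimage f⁻¹(L) is regular} is not countable. -/
/-!
Over a one-letter alphabet the left quotients of a regular language by `aᵐ` repeat with some
period `p` from some point `N` on (Myhill–Nerode), so membership of `aᵐ` depends only on `m mod p`
once `m ≥ N`. The number `k * n!` with `k ≥ 1` is, for large `n`, past `N` and divisible by `p`;
hence `w ↦ a^(k(|w|) * |w|!)` pulls every regular language back to a language that is eventually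
constant in the length, which is regular. Taking `k(n) ∈ {1, 2}` according to membership of `n` in a
set `S ⊆ ℕ` gives an injective family indexed by the uncountable `Set ℕ`.
-/

open List Nat

def RegContinuous {α β : Type*} (f : List α → List β) : Prop :=
  ∀ L : Language β, L.IsRegular → Language.IsRegular {w : List α | f w ∈ L}

namespace Language

variable {α : Type*}

theorem isRegular_setOf_length (P : ℕ → Prop) (N : ℕ) (hP : ∀ n ≥ N, P n ↔ P N) :
    Language.IsRegular {w : List α | P w.length} := by
  apply IsRegular.of_finite_range_leftQuotient
  let F : ℕ → Language α := fun k => {v | P (k + v.length)}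
  refine ((Set.finite_Iic N).image F).subset ?_
  rintro _ ⟨u, rfl⟩
  refine ⟨min u.length N, Set.mem_Iic.2 (min_le_right _ _), ?_⟩
  ext v
  change P (min u.length N + v.length) ↔ P (u ++ v).length
  rw [length_append]
  rcases le_total u.length N with h | h
  · rw [min_eq_left h]
  · rw [min_eq_right h, hP (N + v.length) (by omega), hP (u.length + v.length) (by omega)]

theorem IsRegular.leftQuotient_replicate_periodic {L : Language α} (hL : L.IsRegular) (a : α) :
    ∃ N p, 0 < p ∧ ∀ m ≥ N, ∀ t,
      L.leftQuotient (replicate (m + t * p) a) = L.leftQuotient (replicate m a) := by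
  obtain ⟨i, j, hij, hQ⟩ := Set.Finite.exists_lt_map_eq_of_forall_mem
    (f := fun k => L.leftQuotient (replicate k a)) (fun k => Set.mem_range_self _)
    hL.finite_range_leftQuotient
  have shift : ∀ m ≥ i, L.leftQuotient (replicate (m + (j - i)) a) =
      L.leftQuotient (replicate m a) := by
    intro m hm
    obtain ⟨k, rfl⟩ := Nat.exists_eq_add_of_le hm
    rw [show i + k + (j - i) = j + k by omega, replicate_add, replicate_add,
      leftQuotient_append, leftQuotient_append, ← hQ]
  refine ⟨i, j - i, by omega, fun m hm t => ?_⟩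
  induction t with
  | zero => simp
  | succ t ih => rw [add_mul, one_mul, ← add_assoc, shift _ (by omega), ih]

theorem IsRegular.replicate_mem_iff_of_dvd {L : Language α} (hL : L.IsRegular) (a : α) :
    ∃ N p, 0 < p ∧ ∀ m n, N ≤ m → N ≤ n → p ∣ m → p ∣ n →
      (replicate m a ∈ L ↔ replicate n a ∈ L) := by
  obtain ⟨N, p, hp, hper⟩ := hL.leftQuotient_replicate_periodic a
  have key : ∀ m n, N ≤ m → m ≤ n → p ∣ m → p ∣ n → (replicate m a ∈ L ↔ replicate n a ∈ L) := by
    intro m n hm hmn hpm hpn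
    obtain ⟨t, ht⟩ := Nat.dvd_sub hpn hpm
    obtain rfl : n = m + t * p := by rw [mul_comm]; omega
    rw [← append_nil (replicate m a), ← append_nil (replicate (m + t * p) a), ← mem_leftQuotient,
      ← mem_leftQuotient, hper m hm t]
  refine ⟨N, p, hp, fun m n hm hn hpm hpn => ?_⟩
  rcases le_total m n with h | h
  · exact key m n hm h hpm hpn
  · exact (key n m hn h hpn hpm).symm

end Language

theorem regContinuous_replicate_mul_factorial {α β : Type*} (a : α) (k : ℕ → ℕ)
    (hk : ∀ n, 0 < k n) :
    RegContinuous fun w : List β => replicate (k w.length * w.length !) a := by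
  intro L hL
  obtain ⟨N, p, hp, hmem⟩ := hL.replicate_mem_iff_of_dvd a
  have large : ∀ n ≥ max N p, N ≤ k n * n ! ∧ p ∣ k n * n ! := fun n hn =>
    ⟨by nlinarith [hk n, self_le_factorial n, le_max_left N p],
      Dvd.dvd.mul_left (dvd_factorial hp (le_of_max_le_right hn)) _⟩
  refine Language.isRegular_setOf_length (fun n => replicate (k n * n !) a ∈ L) (max N p)
    fun n hn => ?_
  exact hmem _ _ (large n hn).1 (large _ le_rfl).1 (large n hn).2 (large _ le_rfl).2

open Classical in
noncomputable def factorialStretch (S : Set ℕ) (w : List Unit) : List Unit :=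
  replicate ((if w.length ∈ S then 2 else 1) * w.length !) ()

theorem factorialStretch_injective : Function.Injective factorialStretch := by
  intro S T h
  ext n
  have hlen := congrArg length (congrFun h (replicate n ()))
  simp only [factorialStretch, length_replicate] at hlen
  have := eq_of_mul_eq_mul_right (factorial_pos n) hlen
  split_ifs at this <;> simp_all

open Classical in
theorem regContinuous_factorialStretch (S : Set ℕ) : RegContinuous (factorialStretch S) :=
  regContinuous_replicate_mul_factorial () (fun n => if n ∈ S then 2 else 1) fun n => by
    split_ifs <;> norm_num

theorem not_countable_set_nat : ¬ Countable (Set ℕ) := fun _ =>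
  let ⟨f, hf⟩ := exists_injective_nat (Set ℕ)
  Function.cantor_injective f hf

/-- The set of Reg-continuous functions over a one-letter alphabet is uncountable. -/
theorem uncountably_many_reg_continuous :
    ¬ Set.Countable {f : List Unit → List Unit |
      ∀ L : Language Unit, L.IsRegular →
        Language.IsRegular {w : List Unit | f w ∈ L} } := fun hcount =>
  not_countable_set_nat <| Set.countable_univ_iff.1 <|
    Set.MapsTo.countable_of_injOn (fun S _ => regContinuous_factorialStretch S)
      factorialStretch_injective.injOn hcount
end

section
/- For every strictly monotone function g : ℕ → ℕ, the function f : {a}* → {a}* defined by f(aⁿ) = a^{g(n)!} (i.e. f maps the word of length n to the word of length (g n)!) is Reg-continuous: for every regular language L ⊆ {a}*, the set {aⁿ | a^{g(n)!} ∈ L} is regular. -/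
/-!
Over a one-letter alphabet the left quotients of a regular language `L` by the words `aᵐ` are
finitely many, so by pigeonhole they are eventually periodic: there are `i` and `p > 0` such that
for `m ≥ i` membership of `aᵐ` in `L` depends only on `m mod p`. Since `g n ≥ n`, for
`n ≥ i + p` the length `(g n)!` is at least `i` and divisible by `p`, so membership of `aⁿ` in
the preimage no longer depends on `n`. A language whose membership depends only on the word
length, and eventually not even on that, has finitely many left quotients, hence is regular.
-/

namespace Language

variable {α : Type*}

theorem isRegular_setOf_length_of_eventually_iff (P : ℕ → Prop) (N : ℕ)
    (hP : ∀ n, N ≤ n → (P n ↔ P N)) : Language.IsRegular {w : List α | P w.length} := by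
  refine IsRegular.of_finite_range_leftQuotient <|
    ((Set.finite_Iic N).image fun k => {y : List α | P (k + y.length)}).subset ?_
  rintro _ ⟨x, rfl⟩
  refine ⟨min x.length N, Set.mem_Iic.mpr (min_le_right _ _), Set.ext fun y => ?_⟩
  show P (min x.length N + y.length) ↔ P (x ++ y).length
  rw [List.length_append]
  rcases le_total x.length N with hx | hx
  · rw [min_eq_left hx]
  · rw [min_eq_right hx, hP (N + y.length) (by omega), hP (x.length + y.length) (by omega)]

theorem IsRegular.exists_leftQuotient_replicate_add_eq {L : Language α} (hL : L.IsRegular)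
    (a : α) : ∃ i p, 0 < p ∧ ∀ m, i ≤ m →
      L.leftQuotient (List.replicate (m + p) a) = L.leftQuotient (List.replicate m a) := by
  obtain ⟨i, -, j, -, hij, hq⟩ := Set.infinite_univ.exists_lt_map_eq_of_mapsTo
    (f := fun k => L.leftQuotient (List.replicate k a)) (fun _ _ => Set.mem_range_self _)
    hL.finite_range_leftQuotient
  refine ⟨i, j - i, by omega, fun m hm => ?_⟩
  obtain ⟨t, rfl⟩ := Nat.exists_eq_add_of_le hm
  rw [show i + t + (j - i) = j + t by omega, List.replicate_add, List.replicate_add,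
    leftQuotient_append, leftQuotient_append, hq]

theorem IsRegular.exists_replicate_mem_iff_of_modEq {L : Language α} (hL : L.IsRegular)
    (a : α) : ∃ i p, 0 < p ∧ ∀ m n, i ≤ m → i ≤ n → m ≡ n [MOD p] →
      (List.replicate m a ∈ L ↔ List.replicate n a ∈ L) := by
  obtain ⟨i, p, hp, hperiod⟩ := hL.exists_leftQuotient_replicate_add_eq a
  have hiter : ∀ m, i ≤ m → ∀ k,
      L.leftQuotient (List.replicate (m + k * p) a) = L.leftQuotient (List.replicate m a) := by
    intro m hm k
    induction k with
    | zero => simp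
    | succ k ih => rw [add_mul, one_mul, ← add_assoc, hperiod _ (by omega), ih]
  have hmem : ∀ m n, i ≤ m → m ≤ n → m ≡ n [MOD p] →
      (List.replicate m a ∈ L ↔ List.replicate n a ∈ L) := by
    intro m n hm hmn hmod
    obtain ⟨k, hk⟩ := (Nat.modEq_iff_dvd' hmn).mp hmod
    have := congrArg ([] ∈ ·) (hiter m hm k)
    simpa [show m + k * p = n by rw [mul_comm]; omega] using this.symm
  refine ⟨i, p, hp, fun m n hm hn hmod => ?_⟩
  rcases le_total m n with hmn | hnm
  · exact hmem m n hm hmn hmod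
  · exact (hmem n m hn hnm hmod.symm).symm

end Language

theorem StrictMono.dvd_factorial_apply {g : ℕ → ℕ} (hg : StrictMono g) {p n : ℕ} (hp : 0 < p)
    (hpn : p ≤ n) : p ∣ (g n).factorial :=
  Nat.dvd_factorial hp (hpn.trans hg.le_apply)

theorem StrictMono.le_factorial_apply {g : ℕ → ℕ} (hg : StrictMono g) (n : ℕ) :
    n ≤ (g n).factorial :=
  hg.le_apply.trans (Nat.self_le_factorial _)

/-- For every strictly monotone `g : ℕ → ℕ`, the function `f` over the one-letter
alphabet mapping the word of length `n` to the word of length `(g n)!` is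
Reg-continuous. -/
theorem factorial_of_strictMono_reg_continuous (g : ℕ → ℕ) (hg : StrictMono g) :
    ∀ L : Language Unit, L.IsRegular →
      Language.IsRegular
        {w : List Unit | List.replicate (Nat.factorial (g w.length)) () ∈ L} := by
  intro L hL
  obtain ⟨i, p, hp, hL_iff⟩ := hL.exists_replicate_mem_iff_of_modEq ()
  have hmodEq : ∀ n, p ≤ n → (g n).factorial ≡ 0 [MOD p] := fun n hn =>
    Nat.modEq_zero_iff_dvd.mpr (hg.dvd_factorial_apply hp hn)
  refine Language.isRegular_setOf_length_of_eventually_iff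
    (fun n => List.replicate (g n).factorial () ∈ L) (i + p) fun n hn => hL_iff _ _ ?_ ?_ ?_
  · exact (hg.le_factorial_apply n).trans' (by omega)
  · exact (hg.le_factorial_apply _).trans' (by omega)
  · exact (hmodEq n (by omega)).trans (hmodEq _ (by omega)).symm
end

section
/- Let x, ρ₁, ρ₂ be words over an alphabet B, and define the relation L ⊆ B* × B* by L = {(w·s, w·t) | w, s, t ∈ B*, s·ρ₁ ∈ x* and t·ρ₂ ∈ x*}. Then: (1) if (w·w', w·w'') ∈ L with |w'| > |x| and |w''| > |x|, then (w', w'') ∈ L; (2) if (u, v) ∈ L, then u is a prefix of v or v is a prefix of u. -/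
/-- `wpow x k` is the `k`-fold concatenation `xᵏ` of the word `x`. -/
def wpow {B : Type*} (x : List B) : ℕ → List B
  | 0 => []
  | n + 1 => x ++ wpow x n

/-- The relation `L = Id · ((x*, x*)(ρ₁, ρ₂)⁻¹)`:
pairs `(w·s, w·t)` with `s·ρ₁ ∈ x*` and `t·ρ₂ ∈ x*`. -/
def idXstarRel {B : Type*} (x ρ₁ ρ₂ : List B) : Set (List B × List B) :=
  {p | ∃ w s t : List B, p = (w ++ s, w ++ t) ∧
    (∃ k, s ++ ρ₁ = wpow x k) ∧ (∃ k, t ++ ρ₂ = wpow x k)}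

lemma wpow_length {B : Type*} (x : List B) (k : ℕ) :
    (wpow x k).length = k * x.length := by
  induction k with
  | zero => simp [wpow]
  | succ n ih => simp [wpow, ih, Nat.succ_mul]; ring

lemma wpow_add {B : Type*} (x : List B) (a b : ℕ) :
    wpow x (a + b) = wpow x a ++ wpow x b := by
  induction a with
  | zero => simp [wpow]
  | succ n ih => rw [show n + 1 + b = (n + b) + 1 from by ring]; simp [wpow, ih]

lemma key {B : Type*} (x r z : List B) (k : ℕ) (hx : x ≠ [])
    (h : r ++ z = wpow x k) (hz : z.length ≥ x.length) :
    ∃ j, z = x.drop (r.length % x.length) ++ wpow x j := by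
  have hxl : 0 < x.length := List.length_pos_iff.2 hx
  set q := r.length / x.length with hq
  set a := r.length % x.length with ha
  have hqa : q * x.length + a = r.length := by
    rw [Nat.mul_comm]; exact Nat.div_add_mod ..
  have hlen : r.length + z.length = k * x.length := by
    have := congrArg List.length h
    simpa [wpow_length] using this
  have hqk : q + 1 ≤ k := by
    have h1 : (q + 1) * x.length ≤ k * x.length := by
      have : q * x.length ≤ r.length := Nat.le.intro hqa
      calc (q + 1) * x.length = q * x.length + x.length := by ring
        _ ≤ r.length + z.length := by omega
        _ = k * x.length := hlen
    exact Nat.le_of_mul_le_mul_right h1 hxl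
  have hzd : z = (wpow x k).drop r.length := by
    rw [← h]; simp
  have hdec : k = q + ((k - q - 1) + 1) := by omega
  have hax : a < x.length := ha ▸ Nat.mod_lt _ hxl
  rw [hdec, wpow_add, wpow] at hzd
  rw [← hqa, ← List.drop_drop] at hzd
  have e0 : List.drop (q * x.length) (wpow x q ++ (x ++ wpow x (k - q - 1)))
      = x ++ wpow x (k - q - 1) := by
    rw [List.drop_append_of_le_length (by simp [wpow_length])]
    simp [wpow_length]
  rw [e0, List.drop_append_of_le_length (le_of_lt hax)] at hzd
  exact ⟨k - q - 1, hzd⟩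

/-- (1) If `(w·w', w·w'') ∈ L` with `|w'| > |x|` and `|w''| > |x|`, then
`(w', w'') ∈ L`; (2) any pair in `L` consists of a word and one of its
prefixes (in one order or the other). -/
theorem idXstarRel_cancel_and_prefix {B : Type*} (x ρ₁ ρ₂ : List B) :
    (∀ w w' w'' : List B, (w ++ w', w ++ w'') ∈ idXstarRel x ρ₁ ρ₂ →
      w'.length > x.length → w''.length > x.length →
      (w', w'') ∈ idXstarRel x ρ₁ ρ₂) ∧
    (∀ u v : List B, (u, v) ∈ idXstarRel x ρ₁ ρ₂ → u <+: v ∨ v <+: u) := by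
  constructor
  · rintro w w' w'' ⟨w₀, s, t, heq, ⟨k, hk⟩, ⟨m, hm⟩⟩ h1 h2
    have e1 : w ++ w' = w₀ ++ s := congrArg Prod.fst heq
    have e2 : w ++ w'' = w₀ ++ t := congrArg Prod.snd heq
    rcases le_or_gt w.length w₀.length with hle | hlt
    · -- w₀ = w ++ r, w' = r ++ s, w'' = r ++ t
      have hp : w <+: w₀ :=
        List.prefix_of_prefix_length_le ⟨w', e1⟩ ⟨s, rfl⟩ hle
      obtain ⟨r, rfl⟩ := hp
      refine ⟨r, s, t, ?_, ⟨k, hk⟩, ⟨m, hm⟩⟩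
      have h1' : w' = r ++ s := by
        have := e1; rw [List.append_assoc] at this
        exact List.append_cancel_left this
      have h2' : w'' = r ++ t := by
        have := e2; rw [List.append_assoc] at this
        exact List.append_cancel_left this
      rw [h1', h2']
    · -- w = w₀ ++ r, s = r ++ w', t = r ++ w''
      have hp : w₀ <+: w :=
        List.prefix_of_prefix_length_le ⟨s, e1.symm⟩ ⟨w', rfl⟩ (le_of_lt hlt)
      obtain ⟨r, rfl⟩ := hp
      have hs : s = r ++ w' := by
        have := e1; rw [List.append_assoc] at this
        exact (List.append_cancel_left this).symm
      have ht : t = r ++ w'' := by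
        have := e2; rw [List.append_assoc] at this
        exact (List.append_cancel_left this).symm
      have hx : x ≠ [] := by
        intro hxe
        have hl := congrArg List.length hk
        rw [hs] at hl
        simp only [List.length_append, wpow_length, hxe, List.length_nil,
          Nat.mul_zero] at hl
        simp only [hxe, List.length_nil] at h1
        omega
      rw [hs, List.append_assoc] at hk
      rw [ht, List.append_assoc] at hm
      obtain ⟨j₁, hj₁⟩ := key x r (w' ++ ρ₁) k hx hk (by simp; omega)
      obtain ⟨j₂, hj₂⟩ := key x r (w'' ++ ρ₂) m hx hm (by simp; omega)
      set d := x.drop (r.length % x.length) with hd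
      have hdl : d.length ≤ x.length := by simp [hd]
      have hp1 : d <+: w' :=
        List.prefix_of_prefix_length_le ⟨wpow x j₁, hj₁.symm⟩ ⟨ρ₁, rfl⟩ (by omega)
      have hp2 : d <+: w'' :=
        List.prefix_of_prefix_length_le ⟨wpow x j₂, hj₂.symm⟩ ⟨ρ₂, rfl⟩ (by omega)
      obtain ⟨s', rfl⟩ := hp1
      obtain ⟨t', rfl⟩ := hp2
      refine ⟨d, s', t', rfl, ⟨j₁, ?_⟩, ⟨j₂, ?_⟩⟩
      · rw [List.append_assoc] at hj₁
        exact List.append_cancel_left hj₁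
      · rw [List.append_assoc] at hj₂
        exact List.append_cancel_left hj₂
  · rintro u v ⟨w, s, t, heq, ⟨k, hk⟩, ⟨m, hm⟩⟩
    obtain ⟨rfl, rfl⟩ : u = w ++ s ∧ v = w ++ t := by
      constructor
      · exact congrArg Prod.fst heq
      · exact congrArg Prod.snd heq
    have hs : s <+: wpow x (k + m) := by
      rw [wpow_add]; exact ⟨ρ₁ ++ wpow x m, by rw [← List.append_assoc, hk]⟩
    have ht : t <+: wpow x (k + m) := by
      rw [show k + m = m + k from Nat.add_comm k m, wpow_add]
      exact ⟨ρ₂ ++ wpow x k, by rw [← List.append_assoc, hm]⟩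
    rcases le_or_gt s.length t.length with h | h
    · exact Or.inl ((List.prefix_append_right_inj w).2
        (List.prefix_of_prefix_length_le hs ht h))
    · exact Or.inr ((List.prefix_append_right_inj w).2
        (List.prefix_of_prefix_length_le ht hs (le_of_lt h)))
end

section
/- Let A be a finite alphabet, and let 𝒱 and 𝒲 be sets of languages over A such that 𝒱 is closed under binary intersection, the full language A* belongs to 𝒲, and there is a language L with L ∈ 𝒱 and L ∉ 𝒲. Define the partial function f : A* → A* with domain L acting as the identity, modeled as f : A* → Option A* with f(w) = some w if w ∈ L and f(w) = none otherwise, and for a language K let f⁻¹(K) = {w | ∃ v ∈ K, f(w) = some v}. Then f is 𝒱-continuous (for every K ∈ 𝒱, f⁻¹(K) ∈ 𝒱) but f is not 𝒲-continuous (there exists K ∈ 𝒲 with f⁻¹(K) ∉ 𝒲). -/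
open Classical in
/-- The identity partial function with domain `L`, modeled with `Option`. -/
noncomputable def idOn {A : Type} (L : Set (List A)) : List A → Option (List A) :=
  fun w => if w ∈ L then some w else none

/-- The preimage of a language under a partial function. -/
def pPreimage {A : Type} (f : List A → Option (List A)) (K : Set (List A)) :
    Set (List A) :=
  {w | ∃ v ∈ K, f w = some v}

lemma pPreimage_idOn {A : Type} (L K : Set (List A)) :
    pPreimage (idOn L) K = K ∩ L := by
  ext w
  simp only [pPreimage, idOn, Set.mem_setOf_eq, Set.mem_inter_iff]
  constructor
  · rintro ⟨v, hv, h⟩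
    by_cases hw : w ∈ L
    · simp [hw] at h; subst h; exact ⟨hv, hw⟩
    · simp [hw] at h
  · rintro ⟨hK, hL⟩
    exact ⟨w, hK, by simp [hL]⟩

/-- If `𝒱` is closed under binary intersection, `A* ∈ 𝒲`, and `L ∈ 𝒱 \ 𝒲`,
then the identity partial function with domain `L` is `𝒱`-continuous but not
`𝒲`-continuous. -/
theorem idOn_continuous_V_not_W {A : Type} [Fintype A]
    (V W : Set (Set (List A)))
    (hVinter : ∀ K₁ ∈ V, ∀ K₂ ∈ V, K₁ ∩ K₂ ∈ V)
    (hWuniv : (Set.univ : Set (List A)) ∈ W)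
    (L : Set (List A)) (hLV : L ∈ V) (hLW : L ∉ W) :
    (∀ K ∈ V, pPreimage (idOn L) K ∈ V) ∧
    (∃ K ∈ W, pPreimage (idOn L) K ∉ W) := by
  constructor
  · intro K hK
    rw [pPreimage_idOn]
    exact hVinter K hK L hLV
  · exact ⟨Set.univ, hWuniv, by rw [pPreimage_idOn, Set.univ_inter]; exact hLW⟩
end
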